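/- arXiv:1809.11053 — 2 statements merged into one kernel-verified Lean document; each statement's English description precedes it below -/
import Mathlib

section
/- Let d ≥ 2 and p ∈ (2d/(d+1), 3d/(d+1)). If ρ : ℝ^d → [0,∞) is integrable and ρ^{1/p'} ∈ W^{1,p}(ℝ^d) (so that I_p(ρ) < ∞), then ρ ∈ W^{1,p−1}_loc(ℝ^d); that is, ρ is weakly differentiable and for every compact set K ⊂ ℝ^d one has ∫_K ρ^{p−1} dx < ∞ and ∫_K |∇ρ|^{p−1} dx < ∞. In particular the p-Laplacian Δ_p ρ = div(|∇ρ|^{p−2}∇ρ) is well defined as a distribution for every ρ with finite mass and finite p-Fisher information. -/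
open MeasureTheory Real Set
open scoped ENNReal NNReal

noncomputable section

abbrev Ed (d : ℕ) := EuclideanSpace ℝ (Fin d)

def jap {d : ℕ} (x : Ed d) : ℝ := Real.sqrt (1 + ‖x‖ ^ 2)

def LqNorm {d : ℕ} (q : ℝ) (f : Ed d → ℝ) : ℝ := (∫ x : Ed d, |f x| ^ q) ^ (1 / q)

def pconj (p : ℝ) : ℝ := p / (p - 1)

def pstar (d : ℕ) (p : ℝ) : ℝ := d * p / (d - p)

def alphaP (d : ℕ) (p : ℝ) : ℝ := p * (d + 1) - 2 * d

def MemW1p {d : ℕ} (p : ℝ) (u : Ed d → ℝ) : Prop :=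
  Differentiable ℝ u ∧ MemLp u (ENNReal.ofReal p) volume ∧
    MemLp (fun x => ‖gradient u x‖) (ENNReal.ofReal p) volume

def fisherInfo {d : ℕ} (p : ℝ) (ρ : Ed d → ℝ) : ℝ :=
  pconj p ^ p * ∫ x : Ed d, ‖gradient (fun y => ρ y ^ ((p - 1) / p)) x‖ ^ p

def Kker (d : ℕ) (α : ℝ) (x : Ed d) : Ed d := ‖x‖ ^ (-α) • x

lemma measurable_gradient_aux {d : ℕ} (u : Ed d → ℝ) : Measurable (gradient u) := by
  have : gradient u = fun x => (InnerProductSpace.toDual ℝ (Ed d)).symm (fderiv ℝ u x) := rfl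
  rw [this]
  exact (InnerProductSpace.toDual ℝ (Ed d)).symm.continuous.measurable.comp
    (measurable_fderiv ℝ u)

/-- If `ρ ≥ 0` is integrable and `ρ^{1/p'} ∈ W^{1,p}(ℝ^d)` (so that the
`p`-Fisher information is finite), then `ρ ∈ W^{1,p-1}_loc(ℝ^d)`; in particular the
`p`-Laplacian of `ρ` is well defined as a distribution. -/
theorem statement0 (d : ℕ) (p : ℝ) (hd : 2 ≤ d)
    (hp1 : 2 * (d : ℝ) / ((d : ℝ) + 1) < p) (hp2 : p < 3 * (d : ℝ) / ((d : ℝ) + 1))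
    (ρ : Ed d → ℝ) (hρ0 : ∀ x, 0 ≤ ρ x) (hρ1 : Integrable ρ)
    (hW : MemW1p p fun x => ρ x ^ ((p - 1) / p)) :
    Differentiable ℝ ρ ∧
      (∀ K : Set (Ed d), IsCompact K →
        IntegrableOn (fun x => ρ x ^ (p - 1)) K ∧
          IntegrableOn (fun x => ‖gradient ρ x‖ ^ (p - 1)) K) ∧
      ∀ φ : Ed d → ℝ, ContDiff ℝ (⊤ : ℕ∞) φ → HasCompactSupport φ →
        Integrable fun x =>
          ‖gradient ρ x‖ ^ (p - 2) * (inner ℝ (gradient ρ x) (gradient φ x) : ℝ) := by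
  have hd2 : (2 : ℝ) ≤ (d : ℝ) := by exact_mod_cast hd
  have hd1 : (0 : ℝ) < (d : ℝ) + 1 := by linarith
  have h1p : 1 < p := by
    have h : (1 : ℝ) < 2 * (d : ℝ) / ((d : ℝ) + 1) := by
      rw [lt_div_iff₀ hd1]; linarith
    linarith
  have hp0 : (0 : ℝ) < p := by linarith
  have hpm1 : (0 : ℝ) < p - 1 := by linarith
  set u : Ed d → ℝ := fun x => ρ x ^ ((p - 1) / p) with hu_def
  set q : ℝ := p / (p - 1) with hq_def
  have hq1 : 1 < q := by
    rw [hq_def, lt_div_iff₀ hpm1]; linarith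
  have hq0 : (0 : ℝ) < q := by linarith
  have hu0 : ∀ x, 0 ≤ u x := fun x => Real.rpow_nonneg (hρ0 x) _
  have hq_mul : (p - 1) / p * q = 1 := by
    rw [hq_def]; field_simp
  have hqp1 : (q - 1) * (p - 1) = 1 := by
    rw [hq_def]; field_simp; ring
  have hqmul2 : q * (p - 1) = p := by
    rw [hq_def]; field_simp
  have hρu : ∀ x, ρ x = u x ^ q := by
    intro x
    rw [hu_def]
    simp only
    rw [← Real.rpow_mul (hρ0 x), hq_mul, Real.rpow_one]
  obtain ⟨hudiff, huLp, hguLp⟩ := hW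
  -- the pointwise gradient of ρ
  have hgrad : ∀ x, HasGradientAt ρ ((q * u x ^ (q - 1)) • gradient u x) x := by
    intro x
    have h1 : HasFDerivAt u (InnerProductSpace.toDual ℝ (Ed d) (gradient u x)) x :=
      (hudiff x).hasGradientAt.hasFDerivAt
    have h2 : HasDerivAt (fun t : ℝ => t ^ q) (q * u x ^ (q - 1)) (u x) :=
      Real.hasDerivAt_rpow_const (Or.inr hq1.le)
    have h3 := h2.comp_hasFDerivAt x h1
    have hfun : ρ = fun y => u y ^ q := funext hρu
    rw [hfun, hasGradientAt_iff_hasFDerivAt, _root_.map_smul]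
    exact h3
  have hρdiff : Differentiable ℝ ρ := fun x => (hgrad x).differentiableAt
  have hgradρ : ∀ x, gradient ρ x = (q * u x ^ (q - 1)) • gradient u x :=
    fun x => (hρdiff x).hasGradientAt.unique (hgrad x)
  have hcoef0 : ∀ x, 0 ≤ q * u x ^ (q - 1) :=
    fun x => mul_nonneg hq0.le (Real.rpow_nonneg (hu0 x) _)
  have hng : ∀ x, ‖gradient ρ x‖ = q * u x ^ (q - 1) * ‖gradient u x‖ := by
    intro x
    rw [hgradρ x, norm_smul, Real.norm_of_nonneg (hcoef0 x)]
  -- measurability facts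
  have mgu : Measurable (gradient u) := measurable_gradient_aux u
  have mgρ : Measurable (gradient ρ) := measurable_gradient_aux ρ
  have mu : Measurable u := hudiff.continuous.measurable
  -- integrability of |u|^p and ‖∇u‖^p
  have hne0 : ENNReal.ofReal p ≠ 0 := by
    simp only [ne_eq, ENNReal.ofReal_eq_zero, not_le]; exact hp0
  have hInt_up : Integrable (fun x => |u x| ^ p) := by
    have h := huLp.integrable_norm_rpow hne0 ENNReal.ofReal_ne_top
    simpa [ENNReal.toReal_ofReal hp0.le, Real.norm_eq_abs] using h
  have hInt_gp : Integrable (fun x => ‖gradient u x‖ ^ p) := by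
    have h := hguLp.integrable_norm_rpow hne0 ENNReal.ofReal_ne_top
    simpa [ENNReal.toReal_ofReal hp0.le, norm_norm] using h
  -- conjugate exponents
  have hconj : Real.HolderConjugate p q :=
    (Real.holderConjugate_iff_eq_conjExponent h1p).mpr hq_def
  -- key product integrability (global)
  have hmain : Integrable (fun x => u x * ‖gradient u x‖ ^ (p - 1)) := by
    apply Integrable.mono' (g := fun x => |u x| ^ p / p + ‖gradient u x‖ ^ p / q)
      ((hInt_up.div_const p).add (hInt_gp.div_const q))
      ((mu.mul ((mgu.norm).pow measurable_const)).aestronglyMeasurable)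
    refine Filter.Eventually.of_forall fun x => ?_
    have h0 : 0 ≤ u x * ‖gradient u x‖ ^ (p - 1) :=
      mul_nonneg (hu0 x) (Real.rpow_nonneg (norm_nonneg _) _)
    rw [Pi.mul_apply, Real.norm_of_nonneg h0]
    have hy := Real.young_inequality_of_nonneg (hu0 x)
      (Real.rpow_nonneg (norm_nonneg (gradient u x)) (p - 1)) hconj
    have hpow : (‖gradient u x‖ ^ (p - 1)) ^ q = ‖gradient u x‖ ^ p := by
      rw [← Real.rpow_mul (norm_nonneg _)]
      congr 1
      rw [hq_def]; field_simp
    rw [hpow] at hy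
    calc u x * ‖gradient u x‖ ^ (p - 1)
        ≤ u x ^ p / p + ‖gradient u x‖ ^ p / q := hy
      _ = |u x| ^ p / p + ‖gradient u x‖ ^ p / q := by
          rw [abs_of_nonneg (hu0 x)]
  -- the norm of the gradient of ρ to the power p-1
  have h2b : (fun x => ‖gradient ρ x‖ ^ (p - 1)) =
      fun x => q ^ (p - 1) * (u x * ‖gradient u x‖ ^ (p - 1)) := by
    funext x
    rw [hng x, Real.mul_rpow (hcoef0 x) (norm_nonneg _),
      Real.mul_rpow hq0.le (Real.rpow_nonneg (hu0 x) _),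
      ← Real.rpow_mul (hu0 x), hqp1, Real.rpow_one, mul_assoc]
  have hIntgρ : Integrable (fun x => ‖gradient ρ x‖ ^ (p - 1)) := by
    rw [h2b]
    exact hmain.const_mul _
  have h2a : (fun x => ρ x ^ (p - 1)) = fun x => |u x| ^ p := by
    funext x
    rw [hρu x, ← Real.rpow_mul (hu0 x), hqmul2, abs_of_nonneg (hu0 x)]
  have hIntρp : Integrable (fun x => ρ x ^ (p - 1)) := by rw [h2a]; exact hInt_up
  refine ⟨hρdiff, fun K _ => ⟨hIntρp.integrableOn, hIntgρ.integrableOn⟩, ?_⟩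
  -- third part : the p-Laplacian integrand
  intro φ hφ hφc
  have hgφcont : Continuous (gradient φ) := by
    have h1 : Continuous (fderiv ℝ φ) := hφ.continuous_fderiv (by simp)
    exact (InnerProductSpace.toDual ℝ (Ed d)).symm.continuous.comp h1
  have hgφcs : HasCompactSupport (gradient φ) := by
    have h1 : HasCompactSupport (fderiv ℝ φ) := hφc.fderiv (𝕜 := ℝ)
    exact h1.comp_left (map_zero _)
  obtain ⟨C, hC⟩ := hgφcs.exists_bound_of_continuous hgφcont
  apply Integrable.mono' (g := fun x => ‖gradient ρ x‖ ^ (p - 1) * C)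
    (hIntgρ.mul_const C)
    (((mgρ.norm.pow measurable_const).mul
      (mgρ.inner hgφcont.measurable)).aestronglyMeasurable)
  refine Filter.Eventually.of_forall fun x => ?_
  have hnn : (0:ℝ) ≤ ‖gradient ρ x‖ ^ (p - 2) := Real.rpow_nonneg (norm_nonneg _) _
  rw [Real.norm_eq_abs, Pi.mul_apply, abs_mul, abs_of_nonneg hnn]
  by_cases hz : gradient ρ x = 0
  · rw [hz]
    simp only [inner_zero_left, abs_zero, mul_zero, norm_zero]
    rw [Real.zero_rpow (by linarith : p - 1 ≠ 0), zero_mul]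
  · have hpos : (0:ℝ) < ‖gradient ρ x‖ := norm_pos_iff.mpr hz
    calc ‖gradient ρ x‖ ^ (p - 2) * |(inner ℝ (gradient ρ x) (gradient φ x) : ℝ)|
        ≤ ‖gradient ρ x‖ ^ (p - 2) * (‖gradient ρ x‖ * ‖gradient φ x‖) := by
          exact mul_le_mul_of_nonneg_left (abs_real_inner_le_norm _ _) hnn
      _ = ‖gradient ρ x‖ ^ (p - 1) * ‖gradient φ x‖ := by
          rw [← mul_assoc]
          congr 1
          rw [show p - 1 = p - 2 + 1 by ring, Real.rpow_add_one (ne_of_gt hpos)]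
      _ ≤ ‖gradient ρ x‖ ^ (p - 1) * C := by
          exact mul_le_mul_of_nonneg_left (hC x) (Real.rpow_nonneg (norm_nonneg _) _)
end
end

section
/- Let d ≥ 2, p ∈ (2d/(d+1), 3d/(d+1)), r = p*/p', and let C_S > 0 be any constant such that the Sobolev inequality ‖u‖_{L^{p*}(ℝ^d)} ≤ C_S ‖∇u‖_{L^p(ℝ^d)} holds for all u ∈ W^{1,p}(ℝ^d). Then for every q ∈ [1, r] and every nonnegative ρ ∈ L^1(ℝ^d) with ρ^{1/p'} ∈ W^{1,p}(ℝ^d), one has ‖ρ‖_{L^q} ≤ ((p')^{−1} C_S)^{r'p'/q'} ‖ρ‖_{L^1}^{1 − r'/q'} I_p(ρ)^{r'p'/(q'p)}, where q' and r' denote the Hölder conjugates of q and r. -/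
open MeasureTheory Real Set
open scoped ENNReal NNReal

noncomputable section

/-!
Put `u = ρ^{1/p'}`, so that `ρ = u^{p'}`, `‖ρ‖_r = ‖u‖_{p*}^{p'}` and `I_p(ρ) = (p' ‖∇u‖_p)^p`.
The Sobolev inequality bounds `‖u‖_{p*}` by `C_S ‖∇u‖_p`, and the claim is then the Hölder
interpolation `‖ρ‖_q ≤ ‖ρ‖_1^{1-θ} ‖ρ‖_r^θ` with `θ = r'/q'`.

`LqNorm` is a Bochner integral, which is `0` on non-integrable functions, so the Sobolev
hypothesis says nothing about `‖u‖_{p*}` unless `u ∈ L^{p*}`. It is therefore applied to the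
truncations `c · arctan (u / c)`, which are bounded (hence in `L^{p*}`) and have smaller gradients,
and the bound passes to `u` by Fatou's lemma as `c → ∞`.
-/

open Filter Topology

namespace Real

lemma abs_arctan_le_abs (t : ℝ) : |arctan t| ≤ |t| := by
  have h := convex_univ.norm_image_sub_le_of_norm_deriv_le (f := arctan)
    (fun x _ => differentiableAt_arctan x)
    (fun x _ => by
      simp only [deriv_arctan, one_div]
      rw [norm_of_nonneg (by positivity)]
      exact inv_le_one_of_one_le₀ (by nlinarith [sq_nonneg x]))
    (mem_univ 0) (mem_univ t)
  simpa using h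

lemma tendsto_mul_arctan_div_atTop (t : ℝ) :
    Tendsto (fun c : ℝ => c * arctan (t / c)) atTop (𝓝 t) := by
  have hslope : HasDerivAt (fun s => arctan (t * s)) t 0 := by
    simpa using ((hasDerivAt_id 0).const_mul t).arctan
  refine (hslope.tendsto_slope_zero_right.comp tendsto_inv_atTop_nhdsGT_zero).congr' ?_
  filter_upwards [eventually_ne_atTop 0] with c hc
  simp [div_eq_mul_inv]

end Real

section ArctanTrunc

variable {F : Type*}

def arctanTrunc (c : ℝ) (u : F → ℝ) (x : F) : ℝ := c * arctan (u x / c)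

variable {c : ℝ} {u : F → ℝ} {x : F}

lemma abs_arctanTrunc_le (hc : 0 < c) : |arctanTrunc c u x| ≤ |u x| :=
  calc |arctanTrunc c u x| = c * |arctan (u x / c)| := by
        rw [arctanTrunc, abs_mul, abs_of_pos hc]
    _ ≤ c * |u x / c| := mul_le_mul_of_nonneg_left (abs_arctan_le_abs _) hc.le
    _ = |u x| := by rw [abs_div, abs_of_pos hc, mul_div_cancel₀ _ hc.ne']

lemma abs_arctanTrunc_le_mul_pi_div_two (hc : 0 ≤ c) : |arctanTrunc c u x| ≤ c * (π / 2) := by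
  rw [arctanTrunc, abs_mul, abs_of_nonneg hc]
  gcongr
  exact abs_le.2 ⟨(neg_pi_div_two_lt_arctan _).le, (arctan_lt_pi_div_two _).le⟩

lemma hasFDerivAt_arctanTrunc [NormedAddCommGroup F] [NormedSpace ℝ F] (hc : c ≠ 0)
    (hu : DifferentiableAt ℝ u x) :
    HasFDerivAt (arctanTrunc c u) ((1 + (u x / c) ^ 2)⁻¹ • fderiv ℝ u x) x := by
  have h : HasFDerivAt (fun y => u y / c) (c⁻¹ • fderiv ℝ u x) x := by
    simpa [div_eq_inv_mul] using hu.hasFDerivAt.const_mul c⁻¹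
  refine (h.arctan.const_mul c).congr_fderiv ?_
  rw [smul_smul, smul_smul]
  congr 1
  field_simp

variable [NormedAddCommGroup F] [InnerProductSpace ℝ F] [CompleteSpace F]

lemma norm_gradient_arctanTrunc (hc : c ≠ 0) (hu : DifferentiableAt ℝ u x) :
    ‖gradient (arctanTrunc c u) x‖ = (1 + (u x / c) ^ 2)⁻¹ * ‖gradient u x‖ := by
  rw [gradient, (hasFDerivAt_arctanTrunc hc hu).fderiv, map_smul, norm_smul, gradient,
    norm_of_nonneg (by positivity)]

lemma norm_gradient_arctanTrunc_le (hc : c ≠ 0) (hu : DifferentiableAt ℝ u x) :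
    ‖gradient (arctanTrunc c u) x‖ ≤ ‖gradient u x‖ := by
  rw [norm_gradient_arctanTrunc hc hu]
  exact mul_le_of_le_one_left (norm_nonneg _)
    (inv_le_one_of_one_le₀ (le_add_of_nonneg_right (sq_nonneg _)))

end ArctanTrunc

section Lp

variable {α E : Type*} [MeasurableSpace α] {μ : Measure α} [NormedAddCommGroup E] {f : α → E}

lemma MemLp.of_exponent_le_of_norm_le {p P M : ℝ} (hp : 0 < p) (hpP : p ≤ P)
    (hf : MemLp f (ENNReal.ofReal p) μ) (hM : ∀ x, ‖f x‖ ≤ M) :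
    MemLp f (ENNReal.ofReal P) μ := by
  have hP : 0 < P := hp.trans_le hpP
  rw [← integrable_norm_rpow_iff hf.1 (ENNReal.ofReal_pos.2 hP).ne' ENNReal.ofReal_ne_top,
    ENNReal.toReal_ofReal hP.le]
  have hfp := hf.integrable_norm_rpow (ENNReal.ofReal_pos.2 hp).ne' ENNReal.ofReal_ne_top
  rw [ENNReal.toReal_ofReal hp.le] at hfp
  refine (hfp.const_mul (M ^ (P - p))).mono'
    (hf.1.norm.aemeasurable.pow_const P).aestronglyMeasurable (Eventually.of_forall fun x => ?_)
  have hx := norm_nonneg (f x)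
  calc ‖‖f x‖ ^ P‖ = ‖f x‖ ^ (P - p) * ‖f x‖ ^ p := by
        rw [norm_of_nonneg (rpow_nonneg hx _), ← rpow_add' hx (by linarith), sub_add_cancel]
    _ ≤ M ^ (P - p) * ‖f x‖ ^ p := by
        gcongr
        exact hM x

lemma eLpNorm'_le_eLpNorm'_rpow_mul_eLpNorm'_rpow (hf : AEStronglyMeasurable f μ)
    {p₀ p₁ q θ : ℝ} (hp₀ : 0 < p₀) (hp₁ : 0 < p₁) (hq : 0 < q) (hθ₀ : 0 ≤ θ) (hθ₁ : θ ≤ 1)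
    (hpq : 1 / q = (1 - θ) / p₀ + θ / p₁) :
    eLpNorm' f q μ ≤ eLpNorm' f p₀ μ ^ (1 - θ) * eLpNorm' f p₁ μ ^ θ := by
  set a := q * (1 - θ) / p₀
  set b := q * θ / p₁
  have ha : 0 ≤ a := by positivity
  have hb : 0 ≤ b := by positivity
  have hab : a + b = 1 := by
    simp only [a, b, mul_div_assoc, ← mul_add, ← hpq]
    field_simp
  have hsplit : ∀ x, ‖f x‖ₑ ^ q = (‖f x‖ₑ ^ p₀) ^ a * (‖f x‖ₑ ^ p₁) ^ b := fun x => by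
    rw [← ENNReal.rpow_mul, ← ENNReal.rpow_mul,
      ← ENNReal.rpow_add_of_nonneg _ _ (by positivity) (by positivity)]
    congr 1
    simp only [a, b]
    field_simp
    ring
  have hHolder := ENNReal.lintegral_mul_norm_pow_le (μ := μ)
    (hf.enorm.pow_const p₀) (hf.enorm.pow_const p₁) ha hb hab
  calc eLpNorm' f q μ
      ≤ ((∫⁻ x, ‖f x‖ₑ ^ p₀ ∂μ) ^ a * (∫⁻ x, ‖f x‖ₑ ^ p₁ ∂μ) ^ b) ^ (1 / q) := by
        rw [eLpNorm']
        simp only [hsplit]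
        gcongr
    _ = eLpNorm' f p₀ μ ^ (1 - θ) * eLpNorm' f p₁ μ ^ θ := by
        rw [ENNReal.mul_rpow_of_nonneg _ _ (by positivity), eLpNorm', eLpNorm',
          ← ENNReal.rpow_mul, ← ENNReal.rpow_mul, ← ENNReal.rpow_mul, ← ENNReal.rpow_mul]
        congr 2 <;> simp only [a, b] <;> field_simp

end Lp

section Sobolev

variable {d : ℕ}

lemma LqNorm_nonneg (q : ℝ) (f : Ed d → ℝ) : 0 ≤ LqNorm q f :=
  rpow_nonneg (integral_nonneg fun _ => rpow_nonneg (abs_nonneg _) q) _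

lemma LqNorm_eq_toReal_eLpNorm' {q : ℝ} {f : Ed d → ℝ} (hq : 0 < q)
    (hf : AEStronglyMeasurable f) : LqNorm q f = (eLpNorm' f q volume).toReal := by
  rw [LqNorm, eLpNorm', ← ENNReal.toReal_rpow, integral_eq_lintegral_of_nonneg_ae
    (Eventually.of_forall fun x => rpow_nonneg (abs_nonneg _) _)
    (hf.norm.aemeasurable.pow_const q).aestronglyMeasurable]
  congr 2
  refine lintegral_congr fun x => ?_
  rw [← ENNReal.ofReal_rpow_of_nonneg (abs_nonneg _) hq.le, enorm_eq_ofReal_abs]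

lemma LqNorm_eq_toReal_eLpNorm {q : ℝ} {f : Ed d → ℝ} (hq : 0 < q)
    (hf : AEStronglyMeasurable f) :
    LqNorm q f = (eLpNorm f (ENNReal.ofReal q) volume).toReal := by
  rw [eLpNorm_eq_eLpNorm' (ENNReal.ofReal_pos.2 hq).ne' ENNReal.ofReal_ne_top,
    ENNReal.toReal_ofReal hq.le, LqNorm_eq_toReal_eLpNorm' hq hf]

lemma LqNorm_rpow_self {q : ℝ} (hq : q ≠ 0) (f : Ed d → ℝ) :
    LqNorm q f ^ q = ∫ x, |f x| ^ q := by
  rw [LqNorm, one_div, rpow_inv_rpow (integral_nonneg fun x => rpow_nonneg (abs_nonneg _) _) hq]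

variable {p : ℝ} {u : Ed d → ℝ}

lemma MemW1p.arctanTrunc {c : ℝ} (hc : 0 < c) (hu : MemW1p p u) :
    MemW1p p (_root_.arctanTrunc c u) := by
  obtain ⟨hud, hup, hgp⟩ := hu
  have hd : Differentiable ℝ (_root_.arctanTrunc c u) := fun x =>
    (hasFDerivAt_arctanTrunc hc.ne' (hud x)).differentiableAt
  have hgrad : (fun x => ‖gradient (_root_.arctanTrunc c u) x‖) =
      fun x => (1 + (u x / c) ^ 2)⁻¹ * ‖gradient u x‖ :=
    funext fun x => norm_gradient_arctanTrunc hc.ne' (hud x)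
  refine ⟨hd, hup.of_le hd.continuous.aestronglyMeasurable
    (Eventually.of_forall fun x => abs_arctanTrunc_le hc), hgp.of_le ?_
    (Eventually.of_forall fun x => ?_)⟩
  · rw [hgrad]
    exact (((continuous_const.add ((hud.continuous.div_const c).pow 2)).inv₀
      fun x => (add_pos_of_pos_of_nonneg one_pos (sq_nonneg _)).ne').aestronglyMeasurable).mul
        hgp.1
  · simpa using norm_gradient_arctanTrunc_le hc.ne' (hud x)

lemma LqNorm_gradient_arctanTrunc_le {c : ℝ} (hp : 0 < p) (hc : 0 < c) (hu : MemW1p p u) :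
    (LqNorm p fun x => ‖gradient (arctanTrunc c u) x‖) ≤
      LqNorm p fun x => ‖gradient u x‖ := by
  rw [LqNorm_eq_toReal_eLpNorm hp (hu.arctanTrunc hc).2.2.1, LqNorm_eq_toReal_eLpNorm hp hu.2.2.1]
  exact ENNReal.toReal_mono hu.2.2.eLpNorm_ne_top (eLpNorm_mono fun x => by
    simpa using norm_gradient_arctanTrunc_le hc.ne' (hu.1 x))

variable {P CS : ℝ}

lemma eLpNorm_le_of_sobolev (hp : 0 < p) (hpP : p ≤ P) (hCS : 0 ≤ CS)
    (hSob : ∀ v : Ed d → ℝ, MemW1p p v →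
      LqNorm P v ≤ CS * LqNorm p fun x => ‖gradient v x‖)
    (hu : MemW1p p u) :
    eLpNorm u (ENNReal.ofReal P) volume ≤
      ENNReal.ofReal (CS * LqNorm p fun x => ‖gradient u x‖) := by
  have hP : 0 < P := hp.trans_le hpP
  set w : ℕ → Ed d → ℝ := fun n => arctanTrunc ((n : ℝ) + 1) u
  have hw : ∀ n, MemW1p p (w n) := fun n => hu.arctanTrunc (by positivity)
  have hwP : ∀ n, MemLp (w n) (ENNReal.ofReal P) :=
    fun n => MemLp.of_exponent_le_of_norm_le hp hpP (hw n).2.1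
      fun x => abs_arctanTrunc_le_mul_pi_div_two (by positivity)
  have hbound : ∀ n, eLpNorm (w n) (ENNReal.ofReal P) volume ≤
      ENNReal.ofReal (CS * LqNorm p fun x => ‖gradient u x‖) := fun n => by
    rw [← ENNReal.ofReal_toReal (hwP n).eLpNorm_ne_top,
      ← LqNorm_eq_toReal_eLpNorm hP (hwP n).1]
    exact ENNReal.ofReal_le_ofReal <| (hSob _ (hw n)).trans <|
      mul_le_mul_of_nonneg_left (LqNorm_gradient_arctanTrunc_le hp (by positivity) hu) hCS
  have hlim : ∀ x, Tendsto (fun n => w n x) atTop (𝓝 (u x)) := fun x =>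
    (tendsto_mul_arctan_div_atTop (u x)).comp
      (tendsto_natCast_atTop_atTop.atTop_add tendsto_const_nhds)
  calc eLpNorm u (ENNReal.ofReal P) volume
      ≤ atTop.liminf fun n => eLpNorm (w n) (ENNReal.ofReal P) volume :=
        Lp.eLpNorm_lim_le_liminf_eLpNorm (fun n => (hwP n).1) u (Eventually.of_forall hlim)
    _ ≤ _ := liminf_le_of_frequently_le' (Eventually.of_forall hbound).frequently

end Sobolev

section Exponents

lemma pconj_pos {p : ℝ} (hp : 1 < p) : 0 < pconj p :=
  div_pos (by linarith) (by linarith)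

lemma pconj_le_pconj {q r : ℝ} (hq : 1 < q) (hqr : q ≤ r) : pconj r ≤ pconj q := by
  rw [pconj, pconj, div_le_div_iff₀ (by linarith) (by linarith)]
  nlinarith

lemma pconj_div_pconj_mem_Icc {q r : ℝ} (hq : 1 ≤ q) (hqr : q ≤ r) :
    pconj r / pconj q ∈ Icc 0 1 := by
  rcases hq.eq_or_lt with rfl | hq
  · simp [pconj]
  · exact ⟨div_nonneg (pconj_pos (hq.trans_le hqr)).le (pconj_pos hq).le,
      div_le_one_of_le₀ (pconj_le_pconj hq hqr) (pconj_pos hq).le⟩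

-- At `q = 1` the junk value `pconj 1 = 1 / 0 = 0` makes the exponent `0`, as it should be.
lemma one_div_eq_interpolation {q r : ℝ} (hq : 1 ≤ q) (hr : 1 < r) :
    1 / q = (1 - pconj r / pconj q) / 1 + pconj r / pconj q / r := by
  rcases hq.eq_or_lt with rfl | hq
  · simp [pconj]
  · simp only [pconj]
    field_simp [(by linarith : q - 1 ≠ 0), (by linarith : r - 1 ≠ 0)]
    ring

variable {d : ℕ} {p : ℝ}

lemma one_lt_and_lt_of_bounds (hd : 2 ≤ d) (hp1 : 2 * (d : ℝ) / ((d : ℝ) + 1) < p)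
    (hp2 : p < 3 * (d : ℝ) / ((d : ℝ) + 1)) : 1 < p ∧ p < d := by
  have hd' : (2 : ℝ) ≤ d := by exact_mod_cast hd
  rw [div_lt_iff₀ (by linarith)] at hp1
  rw [lt_div_iff₀ (by linarith)] at hp2
  constructor <;> nlinarith

lemma one_lt_pstar_div_pconj (hp1 : 2 * (d : ℝ) / ((d : ℝ) + 1) < p) (hp : 1 < p)
    (hpd : p < d) : 1 < pstar d p / pconj p := by
  have hd : (0 : ℝ) < d := by linarith
  rw [div_lt_iff₀ (by linarith)] at hp1
  rw [pstar, pconj, one_lt_div (div_pos (by linarith) (by linarith)),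
    div_lt_div_iff₀ (by linarith) (by linarith)]
  nlinarith

lemma lt_pstar (hp : 0 < p) (hpd : p < d) : p < pstar d p := by
  rw [pstar, lt_div_iff₀ (by linarith)]
  nlinarith

end Exponents

section Main

variable {d : ℕ}

lemma fisherInfo_eq_rpow {p : ℝ} (hp : 1 < p) (ρ : Ed d → ℝ) :
    fisherInfo p ρ = (pconj p *
      LqNorm p fun x => ‖gradient (fun y => ρ y ^ ((p - 1) / p)) x‖) ^ p := by
  rw [mul_rpow (pconj_pos hp).le (LqNorm_nonneg _ _), LqNorm_rpow_self (by linarith), fisherInfo]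
  simp only [abs_norm]

lemma LqNorm_le_integral_rpow_mul_rpow {ρ : Ed d → ℝ} (hρ0 : ∀ x, 0 ≤ ρ x)
    (hρ1 : Integrable ρ) {q r θ B : ℝ} (hq : 0 < q) (hr : 0 < r) (hθ₀ : 0 ≤ θ) (hθ₁ : θ ≤ 1)
    (hqr : 1 / q = (1 - θ) / 1 + θ / r) (hB : 0 ≤ B)
    (hρr : eLpNorm' ρ r volume ≤ ENNReal.ofReal B) :
    LqNorm q ρ ≤ (∫ x, ρ x) ^ (1 - θ) * B ^ θ := by
  have hN : 0 ≤ ∫ x, ρ x := integral_nonneg hρ0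
  have hL1 : eLpNorm' ρ 1 volume = ENNReal.ofReal (∫ x, ρ x) := by
    simp [eLpNorm', ← ofReal_integral_norm_eq_lintegral_enorm hρ1, norm_of_nonneg (hρ0 _)]
  rw [LqNorm_eq_toReal_eLpNorm' hq hρ1.1]
  refine ENNReal.toReal_le_of_le_ofReal (by positivity) <|
    (eLpNorm'_le_eLpNorm'_rpow_mul_eLpNorm'_rpow hρ1.1 one_pos hr hq hθ₀ hθ₁ hqr).trans ?_
  rw [hL1, ENNReal.ofReal_mul (by positivity), ← ENNReal.ofReal_rpow_of_nonneg hN (by linarith),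
    ← ENNReal.ofReal_rpow_of_nonneg hB hθ₀]
  gcongr

lemma eLpNorm'_le_of_sobolev {p P CS : ℝ} (hp : 1 < p) (hpP : p ≤ P) (hCS : 0 ≤ CS)
    (hSob : ∀ v : Ed d → ℝ, MemW1p p v →
      LqNorm P v ≤ CS * LqNorm p fun x => ‖gradient v x‖)
    {ρ : Ed d → ℝ} (hρ0 : ∀ x, 0 ≤ ρ x) (hW : MemW1p p fun x => ρ x ^ ((p - 1) / p)) :
    eLpNorm' ρ (P / pconj p) volume ≤ ENNReal.ofReal
      ((CS * LqNorm p fun x => ‖gradient (fun y => ρ y ^ ((p - 1) / p)) x‖) ^ pconj p) := by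
  have hp' := pconj_pos hp
  have hρu : ρ = fun x => ‖ρ x ^ ((p - 1) / p)‖ ^ pconj p := funext fun x => by
    rw [norm_of_nonneg (rpow_nonneg (hρ0 x) _), ← rpow_mul (hρ0 x), pconj,
      div_mul_div_cancel₀ (by linarith), div_self (by linarith), rpow_one]
  have hu := eLpNorm_le_of_sobolev (by linarith) hpP hCS hSob hW
  rw [eLpNorm_eq_eLpNorm' (ENNReal.ofReal_pos.2 (by linarith)).ne' ENNReal.ofReal_ne_top,
    ENNReal.toReal_ofReal (by linarith)] at hu
  conv_lhs => rw [hρu, eLpNorm'_norm_rpow _ _ _ hp', div_mul_cancel₀ _ hp'.ne']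
  rw [← ENNReal.ofReal_rpow_of_nonneg (mul_nonneg hCS (LqNorm_nonneg _ _)) hp'.le]
  gcongr

end Main

/-- the Gagliardo–Nirenberg type interpolation inequality
`‖ρ‖_{L^q} ≤ ((p')⁻¹ C_S)^{r'p'/q'} ‖ρ‖_{L^1}^{1-r'/q'} I_p(ρ)^{r'p'/(q'p)}`
for `q ∈ [1, r]`, `r = p*/p'`, deduced from the Sobolev inequality with constant `C_S`. -/
theorem statement1 (d : ℕ) (p CS q : ℝ) (hd : 2 ≤ d)
    (hp1 : 2 * (d : ℝ) / ((d : ℝ) + 1) < p) (hp2 : p < 3 * (d : ℝ) / ((d : ℝ) + 1))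
    (hCS : 0 < CS)
    (hSob : ∀ u : Ed d → ℝ, MemW1p p u →
      LqNorm (pstar d p) u ≤ CS * LqNorm p fun x => ‖gradient u x‖)
    (hq1 : 1 ≤ q) (hq2 : q ≤ pstar d p / pconj p)
    (ρ : Ed d → ℝ) (hρ0 : ∀ x, 0 ≤ ρ x) (hρ1 : Integrable ρ)
    (hW : MemW1p p fun x => ρ x ^ ((p - 1) / p)) :
    LqNorm q ρ ≤
      ((pconj p)⁻¹ * CS) ^
          (pconj (pstar d p / pconj p) * pconj p / pconj q) *
        (∫ x : Ed d, ρ x) ^ (1 - pconj (pstar d p / pconj p) / pconj q) *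
        fisherInfo p ρ ^ (pconj (pstar d p / pconj p) * pconj p / (pconj q * p)) := by
  obtain ⟨hp, hpd⟩ := one_lt_and_lt_of_bounds hd hp1 hp2
  have hr := one_lt_pstar_div_pconj hp1 hp hpd
  set p' := pconj p
  set r := pstar d p / p'
  set θ := pconj r / pconj q
  set G := LqNorm p fun x => ‖gradient (fun y => ρ y ^ ((p - 1) / p)) x‖
  have hp' : 0 < p' := pconj_pos hp
  have hG : 0 ≤ G := LqNorm_nonneg _ _
  obtain ⟨hθ₀, hθ₁⟩ := pconj_div_pconj_mem_Icc hq1 hq2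
  have hmain : LqNorm q ρ ≤ (∫ x, ρ x) ^ (1 - θ) * ((CS * G) ^ p') ^ θ :=
    LqNorm_le_integral_rpow_mul_rpow hρ0 hρ1 (by linarith) (by linarith) hθ₀ hθ₁
      (one_div_eq_interpolation hq1 hr) (by positivity)
      (eLpNorm'_le_of_sobolev hp (lt_pstar (by linarith) hpd).le hCS.le hSob hρ0 hW)
  have he₁ : pconj r * p' / pconj q = p' * θ := by rw [mul_div_right_comm, mul_comm]
  have he₂ : pconj r * p' / (pconj q * p) = p' * θ / p := by rw [← div_div, he₁]
  have hI : fisherInfo p ρ = (p' * G) ^ p := fisherInfo_eq_rpow hp ρ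
  rw [← rpow_mul (by positivity)] at hmain
  rw [hI, he₁, he₂, ← rpow_mul (by positivity),
    mul_div_cancel₀ _ (by linarith : p ≠ 0), mul_right_comm,
    ← mul_rpow (by positivity) (by positivity), mul_comm]
  convert hmain using 3
  field_simp
end
end
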